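/- Suppose L Ψ = 0 and L^∨ Φ = 0, where L = [[0,∂],[−∂̄,0]] + diag(U, Ū) and L^∨ = [[0,∂],[−∂̄,0]] + diag(Ū, U), with Ψ, Φ smooth 2×2-matrix-valued functions. Then the 1-form ω(Φ,Ψ) = −(i/2)(Φᵀσ₃Ψ + ΦᵀΨ)dz − (i/2)(Φᵀσ₃Ψ − ΦᵀΨ)dz̄ is closed, i.e., ∂̄ of the dz-coefficient equals ∂ of the dz̄-coefficient. -/

import Mathlib

open Complex Matrix

noncomputable def pd1 (f : ℝ → ℝ → ℂ) : ℝ → ℝ → ℂ := fun x y => deriv (fun x' => f x' y) x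
noncomputable def pd2 (f : ℝ → ℝ → ℂ) : ℝ → ℝ → ℂ := fun x y => deriv (fun y' => f x y') y
noncomputable def del (f : ℝ → ℝ → ℂ) : ℝ → ℝ → ℂ :=
  fun x y => (pd1 f x y - Complex.I * pd2 f x y) / 2
noncomputable def delbar (f : ℝ → ℝ → ℂ) : ℝ → ℝ → ℂ :=
  fun x y => (pd1 f x y + Complex.I * pd2 f x y) / 2

/-- σ₃ = diag(1, −1) -/
noncomputable def sigma3 : Matrix (Fin 2) (Fin 2) ℂ := !![1, 0; 0, -1]

/-- dz-coefficient of ω(Φ,Ψ): P = −(i/2)(Φᵀσ₃Ψ + ΦᵀΨ) -/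
noncomputable def omegaP (Φ Ψ : ℝ → ℝ → Matrix (Fin 2) (Fin 2) ℂ) (x y : ℝ) :
    Matrix (Fin 2) (Fin 2) ℂ :=
  (-(Complex.I)/2) • ((Φ x y)ᵀ * sigma3 * Ψ x y + (Φ x y)ᵀ * Ψ x y)

/-- dz̄-coefficient of ω(Φ,Ψ): Q = −(i/2)(Φᵀσ₃Ψ − ΦᵀΨ) -/
noncomputable def omegaQ (Φ Ψ : ℝ → ℝ → Matrix (Fin 2) (Fin 2) ℂ) (x y : ℝ) :
    Matrix (Fin 2) (Fin 2) ℂ :=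
  (-(Complex.I)/2) • ((Φ x y)ᵀ * sigma3 * Ψ x y - (Φ x y)ᵀ * Ψ x y)

lemma d1 {f : ℝ → ℝ → ℂ} (hf : ContDiff ℝ (⊤ : ℕ∞) fun p : ℝ × ℝ => f p.1 p.2) (x y : ℝ) :
    DifferentiableAt ℝ (fun x' => f x' y) x :=
  ((hf.differentiable (by simp)).comp (differentiable_id.prodMk (differentiable_const y))) x

lemma d2 {f : ℝ → ℝ → ℂ} (hf : ContDiff ℝ (⊤ : ℕ∞) fun p : ℝ × ℝ => f p.1 p.2) (x y : ℝ) :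
    DifferentiableAt ℝ (fun y' => f x y') y :=
  ((hf.differentiable (by simp)).comp ((differentiable_const x).prodMk differentiable_id)) y

lemma pd1_mul (f g : ℝ → ℝ → ℂ) (x y : ℝ)
    (hf : DifferentiableAt ℝ (fun x' => f x' y) x)
    (hg : DifferentiableAt ℝ (fun x' => g x' y) x) :
    pd1 (fun a b => f a b * g a b) x y = pd1 f x y * g x y + f x y * pd1 g x y :=
  deriv_mul hf hg

lemma pd2_mul (f g : ℝ → ℝ → ℂ) (x y : ℝ)
    (hf : DifferentiableAt ℝ (fun y' => f x y') y)
    (hg : DifferentiableAt ℝ (fun y' => g x y') y) :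
    pd2 (fun a b => f a b * g a b) x y = pd2 f x y * g x y + f x y * pd2 g x y :=
  deriv_mul hf hg

lemma pd1_cmul (c : ℂ) (f : ℝ → ℝ → ℂ) (x y : ℝ)
    (hf : DifferentiableAt ℝ (fun x' => f x' y) x) :
    pd1 (fun a b => c * f a b) x y = c * pd1 f x y :=
  deriv_const_mul c hf

lemma pd2_cmul (c : ℂ) (f : ℝ → ℝ → ℂ) (x y : ℝ)
    (hf : DifferentiableAt ℝ (fun y' => f x y') y) :
    pd2 (fun a b => c * f a b) x y = c * pd2 f x y :=
  deriv_const_mul c hf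

lemma delbar_mul (f g : ℝ → ℝ → ℂ) (x y : ℝ)
    (hf : ContDiff ℝ (⊤ : ℕ∞) fun p : ℝ × ℝ => f p.1 p.2)
    (hg : ContDiff ℝ (⊤ : ℕ∞) fun p : ℝ × ℝ => g p.1 p.2) :
    delbar (fun a b => f a b * g a b) x y
      = delbar f x y * g x y + f x y * delbar g x y := by
  simp only [delbar, pd1_mul f g x y (d1 hf x y) (d1 hg x y),
    pd2_mul f g x y (d2 hf x y) (d2 hg x y)]
  ring

lemma del_mul (f g : ℝ → ℝ → ℂ) (x y : ℝ)
    (hf : ContDiff ℝ (⊤ : ℕ∞) fun p : ℝ × ℝ => f p.1 p.2)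
    (hg : ContDiff ℝ (⊤ : ℕ∞) fun p : ℝ × ℝ => g p.1 p.2) :
    del (fun a b => f a b * g a b) x y
      = del f x y * g x y + f x y * del g x y := by
  simp only [del, pd1_mul f g x y (d1 hf x y) (d1 hg x y),
    pd2_mul f g x y (d2 hf x y) (d2 hg x y)]
  ring

lemma delbar_cmul (c : ℂ) (f : ℝ → ℝ → ℂ) (x y : ℝ)
    (hf : ContDiff ℝ (⊤ : ℕ∞) fun p : ℝ × ℝ => f p.1 p.2) :
    delbar (fun a b => c * f a b) x y = c * delbar f x y := by
  simp only [delbar, pd1_cmul c f x y (d1 hf x y), pd2_cmul c f x y (d2 hf x y)]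
  ring

lemma del_cmul (c : ℂ) (f : ℝ → ℝ → ℂ) (x y : ℝ)
    (hf : ContDiff ℝ (⊤ : ℕ∞) fun p : ℝ × ℝ => f p.1 p.2) :
    del (fun a b => c * f a b) x y = c * del f x y := by
  simp only [del, pd1_cmul c f x y (d1 hf x y), pd2_cmul c f x y (d2 hf x y)]
  ring

theorem moutard_one_form_closed
    (U : ℝ → ℝ → ℂ)
    (Ψ Φ : ℝ → ℝ → Matrix (Fin 2) (Fin 2) ℂ)
    (hU : ContDiff ℝ (⊤ : ℕ∞) (fun p : ℝ × ℝ => U p.1 p.2))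
    (hΨ : ∀ i j : Fin 2, ContDiff ℝ (⊤ : ℕ∞) (fun p : ℝ × ℝ => Ψ p.1 p.2 i j))
    (hΦ : ∀ i j : Fin 2, ContDiff ℝ (⊤ : ℕ∞) (fun p : ℝ × ℝ => Φ p.1 p.2 i j))
    -- L Ψ = 0 columnwise, L = [[0,∂],[−∂̄,0]] + diag(U, Ū)
    (hLΨ1 : ∀ (j : Fin 2) (x y : ℝ),
      del (fun x' y' => Ψ x' y' 1 j) x y + U x y * Ψ x y 0 j = 0)
    (hLΨ2 : ∀ (j : Fin 2) (x y : ℝ),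
      -(delbar (fun x' y' => Ψ x' y' 0 j) x y) + (starRingEnd ℂ) (U x y) * Ψ x y 1 j = 0)
    -- L^∨ Φ = 0 columnwise, L^∨ = [[0,∂],[−∂̄,0]] + diag(Ū, U)
    (hLΦ1 : ∀ (j : Fin 2) (x y : ℝ),
      del (fun x' y' => Φ x' y' 1 j) x y + (starRingEnd ℂ) (U x y) * Φ x y 0 j = 0)
    (hLΦ2 : ∀ (j : Fin 2) (x y : ℝ),
      -(delbar (fun x' y' => Φ x' y' 0 j) x y) + U x y * Φ x y 1 j = 0) :
    ∀ (i j : Fin 2) (x y : ℝ),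
      delbar (fun x' y' => omegaP Φ Ψ x' y' i j) x y
        = del (fun x' y' => omegaQ Φ Ψ x' y' i j) x y := by
  intro i j x y
  have hP : (fun x' y' => omegaP Φ Ψ x' y' i j)
      = fun a b => (-Complex.I) * (Φ a b 0 i * Ψ a b 0 j) := by
    funext a b
    simp [omegaP, Matrix.mul_apply, Fin.sum_univ_two, sigma3, Matrix.smul_apply,
      Matrix.add_apply, Matrix.transpose_apply]
    ring
  have hQ : (fun x' y' => omegaQ Φ Ψ x' y' i j)
      = fun a b => Complex.I * (Φ a b 1 i * Ψ a b 1 j) := by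
    funext a b
    simp [omegaQ, Matrix.mul_apply, Fin.sum_univ_two, sigma3, Matrix.smul_apply,
      Matrix.sub_apply, Matrix.transpose_apply]
    ring
  rw [hP, hQ]
  have hmulP : ContDiff ℝ (⊤ : ℕ∞) (fun p : ℝ × ℝ => Φ p.1 p.2 0 i * Ψ p.1 p.2 0 j) :=
    (hΦ 0 i).mul (hΨ 0 j)
  have hmulQ : ContDiff ℝ (⊤ : ℕ∞) (fun p : ℝ × ℝ => Φ p.1 p.2 1 i * Ψ p.1 p.2 1 j) :=
    (hΦ 1 i).mul (hΨ 1 j)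
  rw [delbar_cmul _ _ x y hmulP, del_cmul _ _ x y hmulQ,
    delbar_mul _ _ x y (hΦ 0 i) (hΨ 0 j), del_mul _ _ x y (hΦ 1 i) (hΨ 1 j)]
  have h1 := hLΦ2 i x y
  have h2 := hLΨ2 j x y
  have h3 := hLΦ1 i x y
  have h4 := hLΨ1 j x y
  linear_combination Complex.I * Ψ x y 0 j * h1 + Complex.I * Φ x y 0 i * h2
    - Complex.I * Ψ x y 1 j * h3 - Complex.I * Φ x y 1 i * h4
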